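/- Let C be a preadditive category, J a category, F, G : J ⥤ CochainComplex(C, ℤ) functors, and Φ : F ⟶ G a natural transformation. Suppose that for each object X of J we are given a chain map Ψ_X : G(X) ⟶ F(X) and a degree −1 cochain h_X from F(X) to F(X) with δh_X = (cochain of Φ_X ≫ Ψ_X) − (cochain of the identity of F(X)). For a morphism u : X ⟶ Y in J define the degree 0 cochain λ(u) := (cochain of Ψ_X ≫ F(u)) − (cochain of G(u) ≫ Ψ_Y) from G(X) to F(Y), and the degree −1 cochain μ(u) := (h_X composed with (cochain of F(u))) − ((cochain of F(u)) composed with h_Y) from F(X) to F(Y). Then δμ(u) = (cochain of Φ_X) composed with λ(u). -/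

import Mathlib

/-!
Since `ofHom (F u)` is a cocycle of degree 0, `δ` passes through the compositions in `μ(u)`,
and the hypothesis on `δ h` turns `δ μ(u)` into `ofHom` of the morphism
`(Φ_X ≫ Ψ_X - 𝟙) ≫ F u - F u ≫ (Φ_Y ≫ Ψ_Y - 𝟙)`. The identities cancel, and naturality
`F u ≫ Φ_Y = Φ_X ≫ G u` lets `Φ_X` be factored out on the left.
-/

open CategoryTheory CochainComplex.HomComplex

namespace CategoryTheory.NatTrans

theorem app_comp_sub_id_comm_sub {J D : Type*} [Category J] [Category D] [Preadditive D]
    {F G : J ⥤ D} (Φ : F ⟶ G) (Ψ : ∀ X, G.obj X ⟶ F.obj X) {X Y : J} (u : X ⟶ Y) :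
    (Φ.app X ≫ Ψ X - 𝟙 _) ≫ F.map u - F.map u ≫ (Φ.app Y ≫ Ψ Y - 𝟙 _) =
      Φ.app X ≫ (Ψ X ≫ F.map u - G.map u ≫ Ψ Y) := by
  simp only [Preadditive.sub_comp, Preadditive.comp_sub, Category.id_comp, Category.comp_id,
    Category.assoc, Φ.naturality_assoc]
  abel

end CategoryTheory.NatTrans

namespace CochainComplex.HomComplex

variable {C : Type*} [Category C] [Preadditive C] {K L : CochainComplex C ℤ}

theorem δ_comp_ofHom_sub_ofHom_comp (f : K ⟶ L) {n : ℤ} (a : Cochain K K n) (b : Cochain L L n)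
    (m : ℤ) :
    δ n m (a.comp (Cochain.ofHom f) (add_zero n) - (Cochain.ofHom f).comp b (zero_add n)) =
      (δ n m a).comp (Cochain.ofHom f) (add_zero m) -
        (Cochain.ofHom f).comp (δ n m b) (zero_add m) := by
  rw [δ_sub, δ_comp_ofHom, δ_ofHom_comp]

end CochainComplex.HomComplex

/-- The first-level (m = 1) instance of the lemma `dμ^m = λ^m Φ`:
`δ μ(u) = (ofHom Φ_X) ∘ λ(u)` where `λ(u) = ofHom (Ψ_X ≫ F u) - ofHom (G u ≫ Ψ_Y)`
and `μ(u) = h_X ∘ (ofHom (F u)) - (ofHom (F u)) ∘ h_Y`. -/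
theorem stmt_2 {C : Type*} [Category C] [Preadditive C]
    {J : Type*} [Category J]
    (F G : J ⥤ CochainComplex C ℤ) (Φ : F ⟶ G)
    (Ψ : ∀ X : J, G.obj X ⟶ F.obj X)
    (h : ∀ X : J, Cochain (F.obj X) (F.obj X) (-1))
    (hh : ∀ X : J, δ (-1) 0 (h X) =
      Cochain.ofHom (Φ.app X ≫ Ψ X) - Cochain.ofHom (𝟙 (F.obj X)))
    {X Y : J} (u : X ⟶ Y) :
    δ (-1) 0 ((h X).comp (Cochain.ofHom (F.map u)) (by omega) -
        (Cochain.ofHom (F.map u)).comp (h Y) (by omega)) =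
      (Cochain.ofHom (Φ.app X)).comp
        ((Cochain.ofHom (Ψ X ≫ F.map u) - Cochain.ofHom (G.map u ≫ Ψ Y) :
          Cochain (G.obj X) (F.obj Y) 0)) (by omega) := by
  have hh' : ∀ Z, δ (-1) 0 (h Z) = Cochain.ofHom (Φ.app Z ≫ Ψ Z - 𝟙 _) := fun Z => by
    rw [hh, Cochain.ofHom_sub]
  rw [δ_comp_ofHom_sub_ofHom_comp, hh', hh', ← Cochain.ofHom_comp, ← Cochain.ofHom_comp,
    ← Cochain.ofHom_sub, NatTrans.app_comp_sub_id_comm_sub, Cochain.ofHom_comp,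
    Cochain.ofHom_sub]
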